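/- The number of connected components of the pair graph G(G,H,S) equals [H : ⟨H ∩ ((S∩H) ∪ S_O S_O⁻¹)⟩] + |G \ H| − |⋃_{s ∈ S_O} H s|, where S_O = S \ H. -/

import Mathlib

open scoped Pointwise Classical

def pairGraph {G : Type*} [Group G] (H : Subgroup G) (S : Set G) : SimpleGraph G :=
  SimpleGraph.fromRel (fun x y => ∃ h ∈ (H : Set G), ∃ s ∈ S, x = h ∧ y = h * s)

/-!
Every edge of the pair graph has an endpoint in `H`. Vertices outside `H` that are not of the form
`h * s` with `h ∈ H`, `s ∈ S \ H` are isolated, and every such `h * s` hangs off `h`. Two vertices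
`a, b ∈ H` are joined by a walk iff `a⁻¹ * b ∈ K := ⟨H ∩ ((S ∩ H) ∪ (S \ H)(S \ H)⁻¹)⟩`: steps
inside `H` multiply by elements of `S ∩ H`, and a detour `h — h * s₁ = h' * s₂ — h'` through a
vertex outside `H` multiplies by `s₁ * s₂⁻¹`. Conversely `K ∪ K * (S \ H)` is closed under
adjacency, so it is the component of `1`. Hence the components are the cosets in `H ⧸ K` together
with the isolated vertices.
-/

section PairGraph

variable {G : Type*} [Group G] {H : Subgroup G} {S : Set G}

variable (H S) in
def pairGraphSubgroup : Subgroup G :=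
  Subgroup.closure
    ((H : Set G) ∩ ((S ∩ (H : Set G)) ∪ ((S \ (H : Set G)) * (S \ (H : Set G))⁻¹)))

variable (H S) in
def pairGraphOuter : Set G :=
  ⋃ s ∈ S \ (H : Set G), (H : Set G) * {s}

variable (H S) in
def pairGraphBlock : Set G :=
  (pairGraphSubgroup H S : Set G) ∪ (pairGraphSubgroup H S : Set G) * (S \ (H : Set G))

lemma mem_pairGraphOuter {x : G} :
    x ∈ pairGraphOuter H S ↔ ∃ h ∈ H, ∃ s ∈ S \ (H : Set G), h * s = x := by
  simp only [pairGraphOuter, Set.mem_iUnion, Set.mul_singleton, Set.mem_image, SetLike.mem_coe,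
    exists_prop]
  tauto

lemma pairGraphOuter_subset_compl : pairGraphOuter H S ⊆ (H : Set G)ᶜ := by
  rintro _ hx hxH
  obtain ⟨h, hh, s, hs, rfl⟩ := mem_pairGraphOuter.mp hx
  exact hs.2 (by simpa using H.mul_mem (H.inv_mem hh) hxH)

lemma pairGraphSubgroup_le : pairGraphSubgroup H S ≤ H :=
  (Subgroup.closure_le H).mpr Set.inter_subset_left

lemma mem_pairGraphSubgroup_of_mem {s : G} (hs : s ∈ S) (hsH : s ∈ H) :
    s ∈ pairGraphSubgroup H S :=
  Subgroup.subset_closure ⟨hsH, Or.inl ⟨hs, hsH⟩⟩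

lemma mul_inv_mem_pairGraphSubgroup {s t : G} (hs : s ∈ S \ (H : Set G))
    (ht : t ∈ S \ (H : Set G)) (hst : s * t⁻¹ ∈ H) : s * t⁻¹ ∈ pairGraphSubgroup H S :=
  Subgroup.subset_closure ⟨hst, Or.inr (Set.mul_mem_mul hs (Set.inv_mem_inv.mpr ht))⟩

lemma pairGraph_adj_mul {h s : G} (hh : h ∈ H) (hs : s ∈ S) (hs₁ : s ≠ 1) :
    (pairGraph H S).Adj h (h * s) :=
  ⟨by simpa using hs₁, Or.inl ⟨h, hh, s, hs, rfl, rfl⟩⟩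

lemma pairGraph_adj_mul_of_not_mem {h s : G} (hh : h ∈ H) (hs : s ∈ S \ (H : Set G)) :
    (pairGraph H S).Adj h (h * s) :=
  pairGraph_adj_mul hh hs.1 (by rintro rfl; exact hs.2 H.one_mem)

lemma pairGraph_reachable_mul_of_mem_generators {h t : G} (hh : h ∈ H)
    (ht : t ∈ (H : Set G) ∩
      ((S ∩ (H : Set G)) ∪ ((S \ (H : Set G)) * (S \ (H : Set G))⁻¹))) :
    (pairGraph H S).Reachable h (h * t) := by
  obtain ⟨htH, ⟨htS, -⟩ | hmul⟩ := ht
  · rcases eq_or_ne t 1 with rfl | ht₁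
    · rw [mul_one]
    · exact (pairGraph_adj_mul hh htS ht₁).reachable
  · obtain ⟨s, hs, u, hu, rfl⟩ := Set.mem_mul.mp hmul
    -- `h` and `h * s * u` are both joined to the outer vertex `h * s`
    have hback := pairGraph_adj_mul_of_not_mem (H.mul_mem hh htH) (Set.mem_inv.mp hu)
    rw [← mul_assoc, mul_inv_cancel_right] at hback
    rw [← mul_assoc]
    exact (pairGraph_adj_mul_of_not_mem hh hs).reachable.trans hback.reachable.symm

lemma pairGraph_reachable_mul {h k : G} (hh : h ∈ H) (hk : k ∈ pairGraphSubgroup H S) :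
    (pairGraph H S).Reachable h (h * k) := by
  induction hk using Subgroup.closure_induction generalizing h with
  | mem t ht => exact pairGraph_reachable_mul_of_mem_generators hh ht
  | one => rw [mul_one]
  | mul k₁ k₂ hk₁ _ ih₁ ih₂ =>
    rw [← mul_assoc]
    exact (ih₁ hh).trans (ih₂ (H.mul_mem hh (pairGraphSubgroup_le hk₁)))
  | inv k hk ih =>
    have hk' : h * k⁻¹ ∈ H := H.mul_mem hh (H.inv_mem (pairGraphSubgroup_le hk))
    simpa using (ih hk').symm

lemma mem_pairGraphSubgroup_of_mem_pairGraphBlock {u : G} (huH : u ∈ H)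
    (hu : u ∈ pairGraphBlock H S) : u ∈ pairGraphSubgroup H S := by
  obtain hu | ⟨k, hk, s, hs, rfl⟩ := hu
  · exact hu
  · exact absurd (by simpa using H.mul_mem (H.inv_mem (pairGraphSubgroup_le hk)) huH) hs.2

lemma mul_mem_pairGraphBlock {b s : G} (hb : b ∈ H) (hs : s ∈ S)
    (hbB : b ∈ pairGraphBlock H S) : b * s ∈ pairGraphBlock H S := by
  have hbK := mem_pairGraphSubgroup_of_mem_pairGraphBlock hb hbB
  by_cases hsH : s ∈ H
  · exact Or.inl (mul_mem hbK (mem_pairGraphSubgroup_of_mem hs hsH))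
  · exact Or.inr (Set.mul_mem_mul hbK ⟨hs, hsH⟩)

lemma mem_pairGraphBlock_of_mul_mem {b s : G} (hb : b ∈ H) (hs : s ∈ S)
    (hbsB : b * s ∈ pairGraphBlock H S) : b ∈ pairGraphBlock H S := by
  by_cases hsH : s ∈ H
  · have hbsK := mem_pairGraphSubgroup_of_mem_pairGraphBlock (H.mul_mem hb hsH) hbsB
    refine Or.inl ?_
    simpa using mul_mem hbsK (inv_mem (mem_pairGraphSubgroup_of_mem hs hsH))
  · obtain hbsK | hbsK := hbsB
    · exact absurd (by simpa using H.mul_mem (H.inv_mem hb) (pairGraphSubgroup_le hbsK)) hsH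
    · obtain ⟨k, hk, t, ht, hkt⟩ := Set.mem_mul.mp hbsK
      have hb' : b = k * (t * s⁻¹) := by rw [← mul_assoc, hkt, mul_inv_cancel_right]
      have hts : t * s⁻¹ ∈ H := by
        simpa [hb'] using H.mul_mem (H.inv_mem (pairGraphSubgroup_le hk)) hb
      exact Or.inl (hb' ▸ mul_mem hk (mul_inv_mem_pairGraphSubgroup ht ⟨hs, hsH⟩ hts))

lemma mem_smul_pairGraphBlock_of_adj {a x y : G} (ha : a ∈ H)
    (hxy : (pairGraph H S).Adj x y) (hx : x ∈ a • pairGraphBlock H S) :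
    y ∈ a • pairGraphBlock H S := by
  rw [Set.mem_smul_set_iff_inv_smul_mem, smul_eq_mul] at hx ⊢
  obtain ⟨-, ⟨h, hh, s, hs, rfl, rfl⟩ | ⟨h, hh, s, hs, rfl, rfl⟩⟩ := hxy
  · rw [← mul_assoc]
    exact mul_mem_pairGraphBlock (H.mul_mem (H.inv_mem ha) hh) hs hx
  · rw [← mul_assoc] at hx
    exact mem_pairGraphBlock_of_mul_mem (H.mul_mem (H.inv_mem ha) hh) hs hx

lemma mem_smul_pairGraphBlock_of_reachable {a x : G} (ha : a ∈ H)
    (hax : (pairGraph H S).Reachable a x) : x ∈ a • pairGraphBlock H S := by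
  replace hax := (SimpleGraph.reachable_iff_reflTransGen a x).mp hax
  induction hax with
  | refl => exact Set.mem_smul_set.mpr ⟨1, Or.inl (one_mem _), mul_one a⟩
  | tail _ hyz ih => exact mem_smul_pairGraphBlock_of_adj ha hyz ih

lemma pairGraph_reachable_iff {a b : G} (ha : a ∈ H) (hb : b ∈ H) :
    (pairGraph H S).Reachable a b ↔ a⁻¹ * b ∈ pairGraphSubgroup H S := by
  refine ⟨fun hab => ?_, fun hk => by simpa using pairGraph_reachable_mul ha hk⟩
  have := mem_smul_pairGraphBlock_of_reachable ha hab
  rw [Set.mem_smul_set_iff_inv_smul_mem, smul_eq_mul] at this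
  exact mem_pairGraphSubgroup_of_mem_pairGraphBlock (H.mul_mem (H.inv_mem ha) hb) this

lemma pairGraph_not_adj {x y : G} (hxH : x ∉ H) (hxU : x ∉ pairGraphOuter H S) :
    ¬(pairGraph H S).Adj x y := by
  rintro ⟨-, ⟨h, hh, -, -, rfl, -⟩ | ⟨h, hh, s, hs, -, rfl⟩⟩
  · exact hxH hh
  · by_cases hsH : s ∈ H
    · exact hxH (H.mul_mem hh hsH)
    · exact hxU (mem_pairGraphOuter.mpr ⟨h, hh, s, ⟨hs, hsH⟩, rfl⟩)

lemma pairGraph_eq_of_reachable {x y : G} (hxH : x ∉ H) (hxU : x ∉ pairGraphOuter H S)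
    (hxy : (pairGraph H S).Reachable x y) : x = y := by
  obtain ⟨_ | ⟨hadj, -⟩⟩ := hxy
  · rfl
  · exact (pairGraph_not_adj hxH hxU hadj).elim

variable (H S) in
noncomputable def pairGraphComponentOfCoset :
    H ⧸ (pairGraphSubgroup H S).subgroupOf H → (pairGraph H S).ConnectedComponent :=
  Quotient.lift (fun h : H => (pairGraph H S).connectedComponentMk h) fun a b hab =>
    SimpleGraph.ConnectedComponent.sound <|
      (pairGraph_reachable_iff a.2 b.2).mpr
        (Subgroup.mem_subgroupOf.mp (QuotientGroup.leftRel_apply.mp hab))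

lemma pairGraphComponentOfCoset_injective :
    Function.Injective (pairGraphComponentOfCoset H S) := by
  rintro ⟨a⟩ ⟨b⟩ hab
  exact QuotientGroup.eq.mpr
    ((pairGraph_reachable_iff a.2 b.2).mp (SimpleGraph.ConnectedComponent.exact hab))

variable (H S) in
noncomputable def pairGraphComponentMap :
    (H ⧸ (pairGraphSubgroup H S).subgroupOf H) ⊕ ↥((H : Set G)ᶜ \ pairGraphOuter H S) →
      (pairGraph H S).ConnectedComponent :=
  Sum.elim (pairGraphComponentOfCoset H S) fun x => (pairGraph H S).connectedComponentMk x

lemma pairGraphComponentMap_injective : Function.Injective (pairGraphComponentMap H S) := by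
  refine pairGraphComponentOfCoset_injective.sumElim (fun x y hxy => ?_) ?_
  · exact Subtype.ext <|
      pairGraph_eq_of_reachable x.2.1 x.2.2 (SimpleGraph.ConnectedComponent.exact hxy)
  · rintro ⟨h⟩ x hhx
    have hxh :=
      pairGraph_eq_of_reachable x.2.1 x.2.2 (SimpleGraph.ConnectedComponent.exact hhx).symm
    exact x.2.1 (hxh ▸ h.2)

lemma pairGraphComponentMap_surjective : Function.Surjective (pairGraphComponentMap H S) := by
  refine SimpleGraph.ConnectedComponent.ind fun x => ?_
  by_cases hxH : x ∈ H
  · exact ⟨Sum.inl (QuotientGroup.mk ⟨x, hxH⟩), rfl⟩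
  by_cases hxU : x ∈ pairGraphOuter H S
  · obtain ⟨h, hh, s, hs, rfl⟩ := mem_pairGraphOuter.mp hxU
    exact ⟨Sum.inl (QuotientGroup.mk ⟨h, hh⟩),
      SimpleGraph.ConnectedComponent.sound (pairGraph_adj_mul_of_not_mem hh hs).reachable⟩
  · exact ⟨Sum.inr ⟨x, hxH, hxU⟩, rfl⟩

end PairGraph

theorem pairGraph_card_components_general {G : Type*} [Group G] [Fintype G]
    (H : Subgroup G) (S : Set G) :
    Nat.card (pairGraph H S).ConnectedComponent =
      (Subgroup.closure ((H : Set G) ∩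
          ((S ∩ (H : Set G)) ∪ ((S \ (H : Set G)) * (S \ (H : Set G))⁻¹)))).relIndex H
        + (Set.univ \ (H : Set G)).ncard
        - (⋃ s ∈ S \ (H : Set G), (H : Set G) * {s}).ncard := by
  have hle : (pairGraphOuter H S).ncard ≤ (H : Set G)ᶜ.ncard :=
    Set.ncard_le_ncard pairGraphOuter_subset_compl
  rw [← Nat.card_eq_of_bijective _
      ⟨pairGraphComponentMap_injective, pairGraphComponentMap_surjective⟩,
    Nat.card_sum, Nat.card_coe_set_eq, Set.ncard_sdiff pairGraphOuter_subset_compl,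
    ← Nat.add_sub_assoc hle, ← Set.compl_eq_univ_sdiff]
  rfl

/-- the number of connected components of the pair graph equals
`[H : ⟨H ∩ ((S∩H) ∪ S_O S_O⁻¹)⟩] + |G \ H| − |⋃_{s ∈ S_O} H s|`. -/
theorem pairGraph_card_components {G : Type*} [Group G] [Fintype G]
    (H : Subgroup G) (S : Set G)
    (hsym : (S ∩ (H : Set G))⁻¹ = S ∩ (H : Set G)) :
    Nat.card (pairGraph H S).ConnectedComponent =
      (Subgroup.closure ((H : Set G) ∩
          ((S ∩ (H : Set G)) ∪ ((S \ (H : Set G)) * (S \ (H : Set G))⁻¹)))).relIndex H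
        + (Set.univ \ (H : Set G)).ncard
        - (⋃ s ∈ S \ (H : Set G), (H : Set G) * {s}).ncard :=
  pairGraph_card_components_general H S
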